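/- Let Γ_0 ⊆ Γ and Γ'_0 ⊆ Γ' be induced subgraphs of graphs Γ and Γ'. Suppose φ_0 : G_{Γ_0} → G_{Γ'_0} is a continuous isomorphism and f : Γ' → Γ is a graph isomorphism such that φ_0(ker(π_{f(w)})) = ker(π_w) for every vertex w of Γ'_0. Then there is a continuous isomorphism φ : G_Γ → G_{Γ'} such that φ(ker(π_{f(w)})) = ker(π_w) for every vertex w of Γ' and π_{Γ'_0} ∘ φ = φ_0 ∘ π_{Γ_0}, where π_{Γ_0} : G_Γ → G_{Γ_0} and π_{Γ'_0} : G_{Γ'} → G_{Γ'_0} are the coordinate projections. -/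

import Mathlib

open Function

noncomputable section

/-- A discrete group is a topological group. -/
instance (priority := 50) discreteTopologicalGroup (G : Type*) [Group G] [TopologicalSpace G]
    [DiscreteTopology G] : IsTopologicalGroup G where
  continuous_mul := continuous_of_discreteTopology
  continuous_inv := continuous_of_discreteTopology

/-- The sign epimorphism `τ : D_p → C_2 = {±1}` killing the rotations. -/
def dihedralSign (p : ℕ) : DihedralGroup p →* ℤˣ where
  toFun x := match x with
    | DihedralGroup.r _ => 1
    | DihedralGroup.sr _ => -1
  map_one' := rfl
  map_mul' a b := by cases a <;> cases b <;> rfl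

/-- `{±1}` acts on a commutative group by exponentiation (i.e. `-1` acts by inversion). -/
def unitsIntAut (A : Type*) [CommGroup A] : ℤˣ →* MulAut A where
  toFun u :=
    { toFun := fun x => x ^ (u : ℤ)
      invFun := fun x => x ^ (u : ℤ)
      left_inv := fun x => by rcases Int.units_eq_one_or u with h | h <;> simp [h]
      right_inv := fun x => by rcases Int.units_eq_one_or u with h | h <;> simp [h]
      map_mul' := fun x y => mul_zpow x y _ }
  map_one' := by ext x; simp
  map_mul' u v := by
    ext x
    rcases Int.units_eq_one_or u with h | h <;>
      rcases Int.units_eq_one_or v with h' | h' <;>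
        simp [h, h']

/-- The action of `D_p × D_p` on `C_q` given by `(x,y) · g = g^(τ(x)τ(y))`. -/
def Wact (p q : ℕ) : DihedralGroup p × DihedralGroup p →* MulAut (Multiplicative (ZMod q)) :=
  (unitsIntAut (Multiplicative (ZMod q))).comp
    (((dihedralSign p).comp (MonoidHom.fst _ _)) * ((dihedralSign p).comp (MonoidHom.snd _ _)))

/-- The group `W = C_q ⋊ (D_p × D_p)`. -/
abbrev Wgrp (p q : ℕ) : Type :=
  SemidirectProduct (Multiplicative (ZMod q)) (DihedralGroup p × DihedralGroup p) (Wact p q)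

/-- The quotient map `λ : W → D_p × D_p`. -/
abbrev lamW (p q : ℕ) : Wgrp p q →* DihedralGroup p × DihedralGroup p :=
  SemidirectProduct.rightHom

/-- The group `G_Γ ≤ D_p^V × W^R` associated to a graph `Γ = (V, R)`. -/
def GGamma (p q : ℕ) (V : Type*) (R : Set (V × V)) :
    Subgroup ((V → DihedralGroup p) × (R → Wgrp p q)) where
  carrier := {x | ∀ r : R,
    SemidirectProduct.rightHom (x.2 r) = (x.1 (r : V × V).1, x.1 (r : V × V).2)}
  one_mem' := by intro r; simp; rfl
  mul_mem' := by
    intro a b ha hb r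
    simp only [Set.mem_setOf_eq] at ha hb
    simp only [Prod.snd_mul, Pi.mul_apply, map_mul, Prod.fst_mul, ha r, hb r, Prod.mk_mul_mk]
  inv_mem' := by
    intro a ha r
    simp only [Set.mem_setOf_eq] at ha
    simp only [Prod.snd_inv, Pi.inv_apply, map_inv, Prod.fst_inv, ha r, Prod.inv_mk]

instance (n : ℕ) : TopologicalSpace (DihedralGroup n) := ⊥
instance (n : ℕ) : DiscreteTopology (DihedralGroup n) := ⟨rfl⟩
instance (p q : ℕ) : TopologicalSpace (Wgrp p q) := ⊥
instance (p q : ℕ) : DiscreteTopology (Wgrp p q) := ⟨rfl⟩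

variable (p q : ℕ) (V : Type*) (R : Set (V × V))

/-- The coordinate projection `π_v : G_Γ → D_p` at a vertex `v`. -/
def vProj (v : V) : ↥(GGamma p q V R) →* DihedralGroup p :=
  (Pi.evalMonoidHom (fun _ : V => DihedralGroup p) v).comp
    ((MonoidHom.fst _ _).comp (GGamma p q V R).subtype)

/-- The coordinate projection `π_r : G_Γ → W` at an edge `r`. -/
def eProj (r : R) : ↥(GGamma p q V R) →* Wgrp p q :=
  (Pi.evalMonoidHom (fun _ : R => Wgrp p q) r).comp
    ((MonoidHom.snd _ _).comp (GGamma p q V R).subtype)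

variable (I : Type*)

/-- The coordinate projection `π_v : G_Γ × C_2^I → D_p` at a vertex `v`. -/
def vProjK (v : V) : (↥(GGamma p q V R) × (I → ℤˣ)) →* DihedralGroup p :=
  (vProj p q V R v).comp (MonoidHom.fst _ _)

/-- The coordinate projection `π_r : G_Γ × C_2^I → W` at an edge `r`. -/
def eProjK (r : R) : (↥(GGamma p q V R) × (I → ℤˣ)) →* Wgrp p q :=
  (eProj p q V R r).comp (MonoidHom.fst _ _)

/-- The map `ξ_Γ : G_Γ → C_2^V`, `((a_v), (b_r)) ↦ (τ(a_v))_v`. -/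
def xiGamma : ↥(GGamma p q V R) →* (V → ℤˣ) :=
  Pi.monoidHom fun v => (dihedralSign p).comp (vProj p q V R v)

end
noncomputable section
variable (p q : ℕ) (V : Type*) (R : Set (V × V))

/-- The edge set of the induced subgraph on a set `V₀` of vertices. -/
def inducedR (V0 : Set V) : Set (↥V0 × ↥V0) := {e | ((e.1 : V), (e.2 : V)) ∈ R}

/-- The coordinate projection `π_{Γ₀} : G_Γ → G_{Γ₀}` onto the group of an induced
subgraph. -/
def projGGamma (V0 : Set V) :
    ↥(GGamma p q V R) →* ↥(GGamma p q ↥V0 (inducedR V R V0)) :=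
  MonoidHom.codRestrict
    ((MonoidHom.prod
      ((Pi.monoidHom fun v : ↥V0 =>
        Pi.evalMonoidHom (fun _ : V => DihedralGroup p) (v : V)).comp (MonoidHom.fst _ _))
      ((Pi.monoidHom fun e : inducedR V R V0 =>
        Pi.evalMonoidHom (fun _ : R => Wgrp p q)
          (⟨(((e : ↥V0 × ↥V0).1 : V), ((e : ↥V0 × ↥V0).2 : V)), e.2⟩ : R)).comp
        (MonoidHom.snd _ _))).comp (GGamma p q V R).subtype)
    (GGamma p q ↥V0 (inducedR V R V0))
    (fun x => by
      intro e
      exact x.2 ⟨(((e : ↥V0 × ↥V0).1 : V), ((e : ↥V0 × ↥V0).2 : V)), e.2⟩)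
end

/-!
Extend `φ₀` coordinatewise. On `Γ'₀` take the coordinates of `φ₀(π_{Γ₀} x)`; at a vertex
`w` outside `Γ'₀` take `x_{f(w)}`; at any other edge `r` keep the `C_q`-part of `x_{f(r)}`
and replace its `D_p × D_p`-part by the new end-point coordinates. The kernel condition
forces `φ₀` to preserve the signs `τ` (for odd `p`, `τ(a) = 1` iff `a^p = 1`), and
`D_p × D_p` acts on `C_q` only through the signs, so this is a homomorphism. The same
construction for `φ₀⁻¹` and `f⁻¹` gives the inverse. This needs `f(Γ'₀) = Γ₀`: the
involution of `G_{Γ₀}` supported at a vertex outside `f(Γ'₀)` would be sent to an element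
of order at most 2 with trivial vertex coordinates, which is trivial as `q` is odd.
-/

open Set

theorem SemidirectProduct.mk_left_mul_eq_mk_mul_mk {N G : Type*} [Group N] [Group G]
    {φ : G →* MulAut N} (x y : N ⋊[φ] G) (a b : G) (h : φ x.right = φ a) :
    (⟨(x * y).left, a * b⟩ : N ⋊[φ] G) = ⟨x.left, a⟩ * ⟨y.left, b⟩ :=
  SemidirectProduct.ext (by simp [h]) rfl

theorem ZMod.eq_zero_of_add_self_eq_zero {q : ℕ} (hq : Odd q) {c : ZMod q} (h : c + c = 0) :
    c = 0 := by
  have h2 : IsUnit (2 : ZMod q) := by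
    exact_mod_cast (ZMod.isUnit_iff_coprime 2 q).2 (Nat.coprime_two_left.2 hq)
  rw [← two_mul] at h
  exact h2.mul_right_eq_zero.1 h

theorem dihedralSign_eq_one_iff_pow_eq_one {p : ℕ} (hp : Odd p) (x : DihedralGroup p) :
    dihedralSign p x = 1 ↔ x ^ p = 1 := by
  cases x with
  | r i =>
    exact iff_of_true rfl
      (by rw [DihedralGroup.r_pow, ZMod.natCast_self, mul_zero, DihedralGroup.r_zero])
  | sr j =>
    have hsr : DihedralGroup.sr j ^ p = DihedralGroup.sr j := by
      rw [← pow_mod_orderOf, DihedralGroup.orderOf_sr, Nat.odd_iff.1 hp, pow_one]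
    rw [hsr]
    exact iff_of_false (show (-1 : ℤˣ) ≠ 1 by decide) nofun

theorem dihedralSign_comp_eq_of_ker_eq {G : Type*} [Group G] {p : ℕ} (hp : Odd p)
    {α β : G →* DihedralGroup p} (h : α.ker = β.ker) :
    (dihedralSign p).comp α = (dihedralSign p).comp β := by
  have key : ∀ (γ : G →* DihedralGroup p) (x : G),
      dihedralSign p (γ x) = 1 ↔ x ^ p ∈ γ.ker :=
    fun γ x => by rw [dihedralSign_eq_one_iff_pow_eq_one hp, MonoidHom.mem_ker, map_pow]
  refine MonoidHom.ext fun x => ?_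
  have hαβ := (key α x).trans (h ▸ key β x).symm
  simp only [MonoidHom.comp_apply]
  rcases Int.units_eq_one_or (dihedralSign p (α x)) with hα | hα <;>
    rcases Int.units_eq_one_or (dihedralSign p (β x)) with hβ | hβ <;>
    simp only [hα, hβ] at hαβ ⊢ <;> first | rfl | exact absurd hαβ (by decide)

theorem Wact_eq_of_dihedralSign_eq {p q : ℕ} {g g' : DihedralGroup p × DihedralGroup p}
    (h₁ : dihedralSign p g.1 = dihedralSign p g'.1)
    (h₂ : dihedralSign p g.2 = dihedralSign p g'.2) :
    Wact p q g = Wact p q g' := by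
  simp only [Wact, MonoidHom.comp_apply, MonoidHom.mul_apply, MonoidHom.coe_fst,
    MonoidHom.coe_snd, h₁, h₂]

namespace GGamma

variable {p q : ℕ} {V V' : Type*} {R : Set (V × V)} {R' : Set (V' × V')}

theorem ext {x y : GGamma p q V R} (hv : ∀ v, vProj p q V R v x = vProj p q V R v y)
    (he : ∀ r, eProj p q V R r x = eProj p q V R r y) : x = y :=
  Subtype.ext (Prod.ext (funext hv) (funext he))

theorem eProj_right (x : GGamma p q V R) (r : R) :
    (eProj p q V R r x).right = (vProj p q V R r.1.1 x, vProj p q V R r.1.2 x) :=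
  x.2 r

def inr : (V → DihedralGroup p) →* GGamma p q V R :=
  MonoidHom.codRestrict
    ((MonoidHom.id _).prod (MonoidHom.pi fun r : R =>
      SemidirectProduct.inr.comp ((Pi.evalMonoidHom _ r.1.1).prod (Pi.evalMonoidHom _ r.1.2))))
    _ fun _ _ => SemidirectProduct.rightHom_inr _

theorem vProj_inr (a : V → DihedralGroup p) (v : V) :
    vProj p q V R v (inr a) = a v :=
  rfl

theorem eq_one_of_mul_self_eq_one (hq : Odd q) {x : GGamma p q V R}
    (hv : ∀ v, vProj p q V R v x = 1) (hx : x * x = 1) : x = 1 := by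
  refine ext hv fun r => ?_
  have hright : (eProj p q V R r x).right = 1 := by rw [eProj_right, hv, hv]; rfl
  have hsq : (eProj p q V R r x * eProj p q V R r x).left = 1 := by
    rw [← map_mul, hx, map_one]; rfl
  rw [SemidirectProduct.mul_left, hright, map_one, MulAut.one_apply] at hsq
  exact SemidirectProduct.ext (ZMod.eq_zero_of_add_self_eq_zero hq hsq) hright

theorem continuous_vProj (v : V) : Continuous (vProj p q V R v) :=
  (continuous_apply v).comp (continuous_fst.comp continuous_subtype_val)

theorem continuous_eProj (r : R) : Continuous (eProj p q V R r) :=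
  (continuous_apply r).comp (continuous_snd.comp continuous_subtype_val)

theorem continuous_of_continuous_vProj_eProj {X : Type*} [TopologicalSpace X]
    {F : X → GGamma p q V R} (hv : ∀ v, Continuous fun x => vProj p q V R v (F x))
    (he : ∀ r, Continuous fun x => eProj p q V R r (F x)) : Continuous F :=
  continuous_induced_rng.2 ((continuous_pi hv).prodMk (continuous_pi he))

theorem vProj_projGGamma (V0 : Set V) (x : GGamma p q V R) (v : V0) :
    vProj p q V0 (inducedR V R V0) v (projGGamma p q V R V0 x) = vProj p q V R v x :=
  rfl

theorem eProj_projGGamma (V0 : Set V) (x : GGamma p q V R) (e : inducedR V R V0) :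
    eProj p q V0 (inducedR V R V0) e (projGGamma p q V R V0 x) =
      eProj p q V R ⟨((e.1.1 : V), (e.1.2 : V)), e.2⟩ x :=
  rfl

theorem continuous_projGGamma (V0 : Set V) : Continuous (projGGamma p q V R V0) :=
  continuous_of_continuous_vProj_eProj (fun v => continuous_vProj (v : V))
    (fun e => continuous_eProj ⟨((e.1.1 : V), (e.1.2 : V)), e.2⟩)

end GGamma

section VertexKernels

variable {p q : ℕ} {V V' : Type*} {R : Set (V × V)} {R' : Set (V' × V')}

/-- The condition `ψ(ker π_{f(w)}) = ker π_w`, in a form that makes sense for any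
homomorphism `ψ`. -/
def RespectsVertexKernels (ψ : GGamma p q V R →* GGamma p q V' R') (f : V' → V) : Prop :=
  ∀ x w, vProj p q V' R' w (ψ x) = 1 ↔ vProj p q V R (f w) x = 1

theorem respectsVertexKernels_iff_map_ker (φ : GGamma p q V R ≃* GGamma p q V' R')
    (f : V' → V) :
    RespectsVertexKernels φ.toMonoidHom f ↔
      ∀ w, (vProj p q V R (f w)).ker.map φ.toMonoidHom = (vProj p q V' R' w).ker := by
  simp only [RespectsVertexKernels, SetLike.ext_iff, Subgroup.mem_map_equiv, MonoidHom.mem_ker]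
  constructor
  · intro h w x
    simpa using (h (φ.symm x) w).symm
  · intro h x w
    simpa using (h w (φ x)).symm

namespace RespectsVertexKernels

variable {ψ : GGamma p q V R →* GGamma p q V' R'} {f : V' → V}

theorem dihedralSign_eq (hp : Odd p) (h : RespectsVertexKernels ψ f) (x : GGamma p q V R)
    (w : V') :
    dihedralSign p (vProj p q V' R' w (ψ x)) = dihedralSign p (vProj p q V R (f w) x) :=
  DFunLike.congr_fun (dihedralSign_comp_eq_of_ker_eq hp (α := (vProj p q V' R' w).comp ψ)
    (β := vProj p q V R (f w)) (by ext x; exact h x w)) x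

theorem surjective (hq : Odd q) (h : RespectsVertexKernels ψ f) (hψ : Injective ψ) :
    Surjective f := by
  classical
  intro v
  by_contra! hv
  set δ : GGamma p q V R := GGamma.inr (Pi.mulSingle v (DihedralGroup.sr 0))
  have hδ : δ * δ = 1 := by
    rw [← map_mul, ← Pi.mulSingle_mul, DihedralGroup.sr_mul_self, Pi.mulSingle_one, map_one]
  have hψδ : ψ δ = 1 :=
    GGamma.eq_one_of_mul_self_eq_one hq (fun w => (h δ w).2 (Pi.mulSingle_eq_of_ne (hv w) _))
      (by rw [← map_mul, hδ, map_one])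
  have hδv := congrArg (vProj p q V R v) (hψ (hψδ.trans (map_one ψ).symm))
  rw [GGamma.vProj_inr, Pi.mulSingle_eq_same, map_one, DihedralGroup.one_def] at hδv
  cases hδv

theorem symm {φ : GGamma p q V R ≃* GGamma p q V' R'} {g : V → V'} (hfg : LeftInverse f g)
    (h : RespectsVertexKernels φ.toMonoidHom f) : RespectsVertexKernels φ.symm.toMonoidHom g :=
  fun x v => by simpa [hfg v] using (h (φ.symm x) (g v)).symm

end RespectsVertexKernels

end VertexKernels

noncomputable section Extension

variable {p q : ℕ} {V V' : Type*} {R : Set (V × V)} {R' : Set (V' × V')}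
  {V0 : Set V} {V0' : Set V'} (f : V' → V) (hfR : ∀ a b, (a, b) ∈ R' → (f a, f b) ∈ R)
  (hf0 : MapsTo f V0' V0)
  (ψ : GGamma p q V0 (inducedR V R V0) →* GGamma p q V0' (inducedR V' R' V0'))

open scoped Classical in
def extVertex (x : GGamma p q V R) (w : V') : DihedralGroup p :=
  if h : w ∈ V0' then vProj p q V0' (inducedR V' R' V0') ⟨w, h⟩ (ψ (projGGamma p q V R V0 x))
  else vProj p q V R (f w) x

open scoped Classical in
def extEdge (x : GGamma p q V R) (r : R') : Wgrp p q :=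
  if h : r.1.1 ∈ V0' ∧ r.1.2 ∈ V0' then
    eProj p q V0' (inducedR V' R' V0') ⟨(⟨_, h.1⟩, ⟨_, h.2⟩), r.2⟩
      (ψ (projGGamma p q V R V0 x))
  else
    ⟨(eProj p q V R ⟨(f r.1.1, f r.1.2), hfR _ _ r.2⟩ x).left,
      (extVertex f ψ x r.1.1, extVertex f ψ x r.1.2)⟩

theorem extVertex_mul (x y : GGamma p q V R) (w : V') :
    extVertex f ψ (x * y) w = extVertex f ψ x w * extVertex f ψ y w := by
  by_cases h : w ∈ V0' <;> simp [extVertex, h]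

theorem extVertex_dihedralSign (hp : Odd p)
    (hψ : RespectsVertexKernels ψ (hf0.restrict f V0' V0))
    (x : GGamma p q V R) (w : V') :
    dihedralSign p (extVertex f ψ x w) = dihedralSign p (vProj p q V R (f w) x) := by
  by_cases h : w ∈ V0'
  · simp only [extVertex, dif_pos h]
    exact hψ.dihedralSign_eq hp (projGGamma p q V R V0 x) ⟨w, h⟩
  · simp [extVertex, h]

theorem extEdge_right (x : GGamma p q V R) (r : R') :
    (extEdge f hfR ψ x r).right = (extVertex f ψ x r.1.1, extVertex f ψ x r.1.2) := by
  by_cases h : r.1.1 ∈ V0' ∧ r.1.2 ∈ V0'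
  · simp only [extEdge, dif_pos h, GGamma.eProj_right]
    simp [extVertex, h.1, h.2]
  · simp only [extEdge, dif_neg h]

theorem extEdge_mul (hp : Odd p) (hψ : RespectsVertexKernels ψ (hf0.restrict f V0' V0))
    (x y : GGamma p q V R) (r : R') :
    extEdge f hfR ψ (x * y) r = extEdge f hfR ψ x r * extEdge f hfR ψ y r := by
  by_cases h : r.1.1 ∈ V0' ∧ r.1.2 ∈ V0'
  · simp [extEdge, h]
  · simp only [extEdge, dif_neg h, map_mul, extVertex_mul, ← Prod.mk_mul_mk]
    apply SemidirectProduct.mk_left_mul_eq_mk_mul_mk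
    rw [GGamma.eProj_right]
    exact Wact_eq_of_dihedralSign_eq (extVertex_dihedralSign f hf0 ψ hp hψ x _).symm
      (extVertex_dihedralSign f hf0 ψ hp hψ x _).symm

def extHom (hp : Odd p) (hψ : RespectsVertexKernels ψ (hf0.restrict f V0' V0)) :
    GGamma p q V R →* GGamma p q V' R' :=
  MonoidHom.mk' (fun x => ⟨(extVertex f ψ x, extEdge f hfR ψ x), extEdge_right f hfR ψ x⟩)
    fun x y => GGamma.ext (extVertex_mul f ψ x y) (extEdge_mul f hfR hf0 ψ hp hψ x y)

variable (hp : Odd p) (hψ : RespectsVertexKernels ψ (hf0.restrict f V0' V0))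

theorem vProj_extHom (x : GGamma p q V R) (w : V') :
    vProj p q V' R' w (extHom f hfR hf0 ψ hp hψ x) = extVertex f ψ x w :=
  rfl

theorem eProj_extHom (x : GGamma p q V R) (r : R') :
    eProj p q V' R' r (extHom f hfR hf0 ψ hp hψ x) = extEdge f hfR ψ x r :=
  rfl

theorem projGGamma_extHom (x : GGamma p q V R) :
    projGGamma p q V' R' V0' (extHom f hfR hf0 ψ hp hψ x) = ψ (projGGamma p q V R V0 x) :=
  GGamma.ext (fun w => by simp [GGamma.vProj_projGGamma, vProj_extHom, extVertex])
    (fun e => by simp [GGamma.eProj_projGGamma, eProj_extHom, extEdge])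

theorem extHom_respectsVertexKernels : RespectsVertexKernels (extHom f hfR hf0 ψ hp hψ) f := by
  intro x w
  by_cases h : w ∈ V0'
  · simp only [vProj_extHom, extVertex, dif_pos h]
    exact hψ (projGGamma p q V R V0 x) ⟨w, h⟩
  · simp [vProj_extHom, extVertex, h]

theorem continuous_extVertex (hψc : Continuous ψ) (w : V') :
    Continuous fun x : GGamma p q V R => extVertex f ψ x w := by
  by_cases h : w ∈ V0'
  · simp only [extVertex, dif_pos h]
    exact (GGamma.continuous_vProj _).comp (hψc.comp (GGamma.continuous_projGGamma V0))
  · simpa only [extVertex, dif_neg h] using GGamma.continuous_vProj (f w)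

theorem continuous_extHom (hψc : Continuous ψ) : Continuous (extHom f hfR hf0 ψ hp hψ) := by
  refine GGamma.continuous_of_continuous_vProj_eProj (continuous_extVertex f ψ hψc) fun r => ?_
  by_cases h : r.1.1 ∈ V0' ∧ r.1.2 ∈ V0'
  · simp only [eProj_extHom, extEdge, dif_pos h]
    exact (GGamma.continuous_eProj _).comp (hψc.comp (GGamma.continuous_projGGamma V0))
  · simp only [eProj_extHom, extEdge, dif_neg h]
    exact continuous_of_discreteTopology.comp (X := GGamma p q V R)
      (g := fun t : Wgrp p q × DihedralGroup p × DihedralGroup p =>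
        (⟨t.1.left, t.2⟩ : Wgrp p q))
      ((GGamma.continuous_eProj _).prodMk
        ((continuous_extVertex f ψ hψc _).prodMk (continuous_extVertex f ψ hψc _)))

theorem extHom_comp_extHom (g : V → V') (hgR : ∀ a b, (a, b) ∈ R → (g a, g b) ∈ R')
    (hg0 : MapsTo g V0 V0')
    (ψ' : GGamma p q V0' (inducedR V' R' V0') →* GGamma p q V0 (inducedR V R V0))
    (hψ' : RespectsVertexKernels ψ' (hg0.restrict g V0 V0'))
    (hfg : LeftInverse f g) (hψψ' : LeftInverse ψ' ψ) :
    (extHom g hgR hg0 ψ' hp hψ').comp (extHom f hfR hf0 ψ hp hψ) = MonoidHom.id _ := by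
  ext1 x
  have hproj :
      ψ' (projGGamma p q V' R' V0' (extHom f hfR hf0 ψ hp hψ x)) = projGGamma p q V R V0 x := by
    rw [projGGamma_extHom, hψψ']
  have hvert : ∀ v, extVertex g ψ' (extHom f hfR hf0 ψ hp hψ x) v = vProj p q V R v x := by
    intro v
    by_cases h : v ∈ V0
    · simp only [extVertex, dif_pos h, hproj, GGamma.vProj_projGGamma]
    · have hgv : g v ∉ V0' := fun hgv => h (hfg v ▸ hf0 hgv)
      simp only [extVertex, dif_neg h, vProj_extHom, dif_neg hgv, hfg v]
  refine GGamma.ext hvert fun r => ?_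
  by_cases h : r.1.1 ∈ V0 ∧ r.1.2 ∈ V0
  · simp only [MonoidHom.comp_apply, eProj_extHom, extEdge, dif_pos h, hproj,
      GGamma.eProj_projGGamma, MonoidHom.id_apply]
  · have hgr : ¬(g r.1.1 ∈ V0' ∧ g r.1.2 ∈ V0') := fun hgr =>
      h ⟨hfg r.1.1 ▸ hf0 hgr.1, hfg r.1.2 ▸ hf0 hgr.2⟩
    have hfgr : (⟨(f (g r.1.1), f (g r.1.2)), hfR _ _ (hgR _ _ r.2)⟩ : R) = r := by
      ext <;> simp [hfg _]
    refine SemidirectProduct.ext ?_ ?_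
    · simp only [MonoidHom.comp_apply, eProj_extHom, extEdge, dif_neg h, dif_neg hgr, hfgr,
        MonoidHom.id_apply]
    · simp only [MonoidHom.comp_apply, eProj_extHom, extEdge_right, hvert, GGamma.eProj_right,
        MonoidHom.id_apply]

end Extension

theorem statement_14_general (p q : ℕ) (hpo : Odd p) (hqo : Odd q)
    (V V' : Type) (R : Set (V × V)) (R' : Set (V' × V'))
    (V0 : Set V) (V0' : Set V')
    (φ0 : ↥(GGamma p q ↥V0 (inducedR V R V0)) ≃* ↥(GGamma p q ↥V0' (inducedR V' R' V0')))
    (hφ0c : Continuous ⇑φ0) (hφ0cs : Continuous ⇑φ0.symm)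
    (f : V' ≃ V) (hfR : ∀ a b : V', (a, b) ∈ R' ↔ (f a, f b) ∈ R)
    (hf0 : ∀ w : V', w ∈ V0' → f w ∈ V0)
    (hker0 : ∀ w : ↥V0',
      ((vProj p q ↥V0 (inducedR V R V0) ⟨f (w : V'), hf0 w w.2⟩).ker).map φ0.toMonoidHom =
        (vProj p q ↥V0' (inducedR V' R' V0') w).ker) :
    ∃ φ : ↥(GGamma p q V R) ≃* ↥(GGamma p q V' R'),
      Continuous ⇑φ ∧ Continuous ⇑φ.symm ∧
      (∀ w : V', ((vProj p q V R (f w)).ker).map φ.toMonoidHom = (vProj p q V' R' w).ker) ∧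
      ∀ x : ↥(GGamma p q V R),
        projGGamma p q V' R' V0' (φ x) = φ0 (projGGamma p q V R V0 x) := by
  have hmaps : MapsTo f V0' V0 := fun w hw => hf0 w hw
  have hφ0 : RespectsVertexKernels φ0.toMonoidHom (hmaps.restrict f V0' V0) :=
    (respectsVertexKernels_iff_map_ker φ0 _).2 hker0
  have hmaps' : MapsTo f.symm V0 V0' := by
    intro v hv
    obtain ⟨w, hw⟩ := hφ0.surjective hqo φ0.injective ⟨v, hv⟩
    have hfw : f w = v := congrArg Subtype.val hw
    rw [← hfw, Equiv.symm_apply_apply]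
    exact w.2
  have hφ0' : RespectsVertexKernels φ0.symm.toMonoidHom (hmaps'.restrict f.symm V0 V0') :=
    hφ0.symm fun v => Subtype.ext (f.apply_symm_apply v)
  have hfR' : ∀ a b, (a, b) ∈ R → (f.symm a, f.symm b) ∈ R' := fun a b hab =>
    (hfR _ _).2 (by simpa using hab)
  have hfR₁ : ∀ a b, (a, b) ∈ R' → (f a, f b) ∈ R := fun a b => (hfR a b).1
  refine ⟨(extHom f hfR₁ hmaps φ0.toMonoidHom hpo hφ0).toMulEquiv
      (extHom f.symm hfR' hmaps' φ0.symm.toMonoidHom hpo hφ0')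
      (extHom_comp_extHom f hfR₁ hmaps _ hpo hφ0 f.symm hfR' hmaps' _ hφ0'
        f.apply_symm_apply φ0.symm_apply_apply)
      (extHom_comp_extHom f.symm hfR' hmaps' _ hpo hφ0' f hfR₁ hmaps _ hφ0
        f.symm_apply_apply φ0.apply_symm_apply),
    continuous_extHom _ _ _ _ hpo hφ0 hφ0c, continuous_extHom _ _ _ _ hpo hφ0' hφ0cs,
    (respectsVertexKernels_iff_map_ker _ f).1 (extHom_respectsVertexKernels _ _ _ _ hpo hφ0),
    projGGamma_extHom _ _ _ _ hpo hφ0⟩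

/-- Let `Γ₀ ⊆ Γ` and `Γ'₀ ⊆ Γ'` be induced subgraphs.  Suppose
`φ₀ : G_{Γ₀} → G_{Γ'₀}` is a continuous isomorphism and `f : Γ' → Γ` a graph isomorphism
such that `φ₀(ker π_{f(w)}) = ker π_w` for every vertex `w` of `Γ'₀`.  Then there is a
continuous isomorphism `φ : G_Γ → G_{Γ'}` with `φ(ker π_{f(w)}) = ker π_w` for every vertex
`w` of `Γ'` and `π_{Γ'₀} ∘ φ = φ₀ ∘ π_{Γ₀}`. -/
theorem statement_14 (p q : ℕ) (hp : p.Prime) (hq : q.Prime) (hpo : Odd p) (hqo : Odd q)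
    (hpq : p ≠ q) (V V' : Type) (R : Set (V × V)) (R' : Set (V' × V'))
    (hloop : ∀ v : V, (v, v) ∉ R) (hor : ∀ a b : V, (a, b) ∈ R → (b, a) ∉ R)
    (hloop' : ∀ v : V', (v, v) ∉ R') (hor' : ∀ a b : V', (a, b) ∈ R' → (b, a) ∉ R')
    (V0 : Set V) (V0' : Set V')
    (φ0 : ↥(GGamma p q ↥V0 (inducedR V R V0)) ≃* ↥(GGamma p q ↥V0' (inducedR V' R' V0')))
    (hφ0c : Continuous ⇑φ0) (hφ0cs : Continuous ⇑φ0.symm)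
    (f : V' ≃ V) (hfR : ∀ a b : V', (a, b) ∈ R' ↔ (f a, f b) ∈ R)
    (hf0 : ∀ w : V', w ∈ V0' → f w ∈ V0)
    (hker0 : ∀ w : ↥V0',
      ((vProj p q ↥V0 (inducedR V R V0) ⟨f (w : V'), hf0 w w.2⟩).ker).map φ0.toMonoidHom =
        (vProj p q ↥V0' (inducedR V' R' V0') w).ker) :
    ∃ φ : ↥(GGamma p q V R) ≃* ↥(GGamma p q V' R'),
      Continuous ⇑φ ∧ Continuous ⇑φ.symm ∧
      (∀ w : V', ((vProj p q V R (f w)).ker).map φ.toMonoidHom = (vProj p q V' R' w).ker) ∧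
      ∀ x : ↥(GGamma p q V R),
        projGGamma p q V' R' V0' (φ x) = φ0 (projGGamma p q V R V0 x) :=
  statement_14_general p q hpo hqo V V' R R' V0 V0' φ0 hφ0c hφ0cs f hfR hf0 hker0
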